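/- If C is the split octonion algebra over a field k of characteristic ≠ 2,3, then the Albert algebra H(C; 1,−1,1) contains two non-proportional orthogonal nontrivial nilpotent elements (i.e., elements a, b with a∘a = 0, b∘b = 0, a∘b = 0, a,b ≠ 0, and a,b not scalar multiples of each other). -/

import Mathlib

open Matrix

/-- An octonion algebra over a field `k`: an 8-dimensional unital (possibly
non-associative) `k`-algebra with a conjugation, a "real part" functional and a
multiplicative nondegenerate norm (quadratic) form. -/
structure OctonionAlgebra (k : Type) [Field k] where
  V : Type
  [ring : NonAssocRing V]
  [mod : Module k V]
  [sct : IsScalarTower k V V]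
  [scc : SMulCommClass k V V]
  conj : V →ₗ[k] V
  re : V →ₗ[k] k
  re_one : re 1 = 1
  conj_one : conj 1 = 1
  conj_conj : ∀ x, conj (conj x) = x
  conj_mul : ∀ x y, conj (x * y) = conj y * conj x
  add_conj : ∀ x, x + conj x = (2 * re x) • 1
  N : QuadraticForm k V
  mul_conj : ∀ x, x * conj x = N x • (1 : V)
  N_one : N 1 = 1
  N_mul : ∀ x y, N (x * y) = N x * N y
  N_nondeg : (QuadraticMap.polarBilin N).Nondegenerate
  finrank_eq : Module.finrank k V = 8

attribute [instance] OctonionAlgebra.ring OctonionAlgebra.mod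
  OctonionAlgebra.sct OctonionAlgebra.scc

variable {k : Type} [Field k] (C : OctonionAlgebra k)

/-- `Γ = diag(1,−1,1)`, as a matrix with entries in `C`. -/
def Gam : Matrix (Fin 3) (Fin 3) C.V := Matrix.diagonal ![1, -1, 1]

/-- A matrix over the octonions is `Γ`-hermitian (for `Γ = diag(1,−1,1)`,
which is its own inverse) if `Γ (θ̄)ᵀ Γ = θ`. -/
def IsHerm (θ : Matrix (Fin 3) (Fin 3) C.V) : Prop :=
  Gam C * (θ.transpose.map C.conj) * Gam C = θ

/-- The Jordan product `x∘y = (x·y + y·x)/2`. -/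
def jmul (x y : Matrix (Fin 3) (Fin 3) C.V) : Matrix (Fin 3) (Fin 3) C.V :=
  ((2 : k)⁻¹) • (x * y + y * x)

/-- The scalar trace of a matrix over the octonions. -/
def mtr (θ : Matrix (Fin 3) (Fin 3) C.V) : k := C.re (Matrix.trace θ)

/-- The norm form `Q(x) = tr(x²)/2` on hermitian matrices. -/
def Qn (x : Matrix (Fin 3) (Fin 3) C.V) : k := mtr C (x * x) / 2

/-- The trace bilinear form `⟨x, y⟩ = tr(x∘y)`. -/
def ip (x y : Matrix (Fin 3) (Fin 3) C.V) : k := mtr C (jmul C x y)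

/-- The primitive idempotent `u = diag(0,0,1)`. -/
def uIdem : Matrix (Fin 3) (Fin 3) C.V := Matrix.diagonal ![0, 0, 1]

/-!
Take `c ≠ 0` in `C` with `N c = 0`, so that `c c̄ = c̄ c = 0`, and the `Γ`-hermitian off-diagonal
elements `a = c e₀₁ - c̄ e₁₀` and `b = c e₂₁ - c̄ e₁₂`. Their squares are `-N(c)(e₀₀ + e₁₁)` and
`-N(c)(e₂₂ + e₁₁)`, and `ab = -c c̄ e₀₂`, `ba = -c c̄ e₂₀`, so all Jordan products vanish; being
supported in different positions, `a` and `b` are not proportional.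
-/

namespace OctonionAlgebra

theorem conj_eq (x : C.V) : C.conj x = (2 * C.re x) • 1 - x :=
  eq_sub_of_add_eq' (C.add_conj x)

theorem conj_mul_self (x : C.V) : C.conj x * x = C.N x • 1 := by
  rw [← C.mul_conj, conj_eq, sub_mul, mul_sub, smul_mul_assoc, mul_smul_comm, one_mul, mul_one]

end OctonionAlgebra

section OffDiag

variable {n : Type} [DecidableEq n]

def offDiag (i j : n) (x : C.V) : Matrix n n C.V :=
  single i j x - single j i (C.conj x)

variable {C} {i j l a b : n} {x y : C.V}

theorem offDiag_apply_self (hij : i ≠ j) : offDiag C i j x i j = x := by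
  simp [offDiag, hij]

theorem offDiag_apply_eq_zero (h₁ : ¬(i = a ∧ j = b)) (h₂ : ¬(j = a ∧ i = b)) :
    offDiag C i j x a b = 0 := by
  simp [offDiag, h₁, h₂]

theorem offDiag_ne_zero (hij : i ≠ j) (hx : x ≠ 0) : offDiag C i j x ≠ 0 := fun h ↦
  hx (by simpa [offDiag_apply_self hij] using congrFun (congrFun h i) j)

theorem offDiag_ne_smul_offDiag (hij : i ≠ j) (hx : x ≠ 0) {i' j' : n}
    (h₁ : ¬(i' = i ∧ j' = j)) (h₂ : ¬(j' = i ∧ i' = j)) (s : k) :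
    offDiag C i j x ≠ s • offDiag C i' j' y := fun h ↦ by
  have hij' := congrFun (congrFun h i) j
  rw [offDiag_apply_self hij, Matrix.smul_apply, offDiag_apply_eq_zero h₁ h₂, smul_zero] at hij'
  exact hx hij'

theorem map_conj_transpose_offDiag (i j : n) (x : C.V) :
    (offDiag C i j x)ᵀ.map C.conj = -offDiag C i j x := by
  rw [offDiag, transpose_sub, Matrix.map_sub _ (map_sub C.conj), transpose_single, transpose_single,
    map_single, map_single, C.conj_conj, neg_sub]

variable [Fintype n]

theorem offDiag_mul_self (hij : i ≠ j) :
    offDiag C i j x * offDiag C i j x = -C.N x • (single i i 1 + single j j 1) := by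
  simp only [offDiag, mul_sub, sub_mul, ne_eq, hij, hij.symm, not_false_eq_true,
    single_mul_single_of_ne, single_mul_single_same, C.conj_mul_self, C.mul_conj, zero_sub,
    sub_zero, smul_add, neg_smul, smul_single]
  abel

theorem offDiag_mul_offDiag (hij : i ≠ j) (hlj : l ≠ j) (hil : i ≠ l) :
    offDiag C i j x * offDiag C l j y = -single i l (x * C.conj y) := by
  simp [offDiag, sub_mul, mul_sub, hij, hlj.symm, hil]

end OffDiag

section Albert

variable {C} {i j l : Fin 3} {x : C.V}

theorem isHerm_offDiag (h : Xor (i = 1) (j = 1)) : IsHerm C (offDiag C i j x) := by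
  -- conjugate transposition negates `offDiag`, and so does `Γ · Γ` since `γᵢ γⱼ = -1`
  rw [IsHerm, map_conj_transpose_offDiag]
  ext a b
  simp only [Gam, mul_diagonal, diagonal_mul]
  fin_cases i <;> fin_cases j <;> simp at h <;> fin_cases a <;> fin_cases b <;> simp [offDiag]

theorem jmul_eq_zero_of_mul_eq_zero {θ η : Matrix (Fin 3) (Fin 3) C.V} (hθη : θ * η = 0)
    (hηθ : η * θ = 0) : jmul C θ η = 0 := by
  rw [jmul, hθη, hηθ, add_zero, smul_zero]

theorem jmul_offDiag_self_of_N_eq_zero (hij : i ≠ j) (hx : C.N x = 0) :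
    jmul C (offDiag C i j x) (offDiag C i j x) = 0 := by
  have hsq : offDiag C i j x * offDiag C i j x = 0 := by
    rw [offDiag_mul_self hij, hx, neg_zero, zero_smul]
  exact jmul_eq_zero_of_mul_eq_zero hsq hsq

theorem jmul_offDiag_offDiag_of_N_eq_zero (hij : i ≠ j) (hlj : l ≠ j) (hil : i ≠ l)
    (hx : C.N x = 0) : jmul C (offDiag C i j x) (offDiag C l j x) = 0 := by
  have hxx : x * C.conj x = 0 := by rw [C.mul_conj, hx, zero_smul]
  refine jmul_eq_zero_of_mul_eq_zero ?_ ?_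
  · rw [offDiag_mul_offDiag hij hlj hil, hxx, single_zero, neg_zero]
  · rw [offDiag_mul_offDiag hlj hij hil.symm, hxx, single_zero, neg_zero]

end Albert

theorem split_two_orthogonal_nilpotents
    (hsplit : ∃ c : C.V, c ≠ 0 ∧ C.N c = 0) :
    ∃ a b : Matrix (Fin 3) (Fin 3) C.V,
      IsHerm C a ∧ IsHerm C b ∧ a ≠ 0 ∧ b ≠ 0 ∧
      jmul C a a = 0 ∧ jmul C b b = 0 ∧ jmul C a b = 0 ∧
      (∀ s : k, b ≠ s • a) ∧ (∀ s : k, a ≠ s • b) := by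
  obtain ⟨c, hc, hNc⟩ := hsplit
  exact ⟨offDiag C 0 1 c, offDiag C 2 1 c, isHerm_offDiag (by decide),
    isHerm_offDiag (by decide), offDiag_ne_zero (by decide) hc, offDiag_ne_zero (by decide) hc,
    jmul_offDiag_self_of_N_eq_zero (by decide) hNc, jmul_offDiag_self_of_N_eq_zero (by decide) hNc,
    jmul_offDiag_offDiag_of_N_eq_zero (by decide) (by decide) (by decide) hNc,
    offDiag_ne_smul_offDiag (by decide) hc (by decide) (by decide),
    offDiag_ne_smul_offDiag (by decide) hc (by decide) (by decide)⟩
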